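/- Let X be a locally compact, Hausdorff, connected space. A quasi-linear functional ρ on C₀(X) is monotone (i.e., f ≤ g implies ρ(f) ≤ ρ(g) for all f, g ∈ C₀(X)) if and only if it is bounded (i.e., ‖ρ‖ = sup{ρ(f) : f ∈ C₀(X), 0 ≤ f ≤ 1} < ∞). -/

import Mathlib

open Set Filter Topology MeasureTheory
open scoped ENNReal BoundedContinuousFunction

universe u

/-- A topological measure on `X`: a set function on subsets of `X` (only its values on open
and closed sets matter), not identically `∞` on open/closed sets, satisfying (TM1)–(TM3). -/
structure TopMeasure (X : Type u) [TopologicalSpace X] where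
  toFun : Set X → ℝ≥0∞
  not_all_top : ∃ A : Set X, (IsOpen A ∨ IsClosed A) ∧ toFun A ≠ ∞
  tm1 : ∀ A B : Set X, Disjoint A B → (IsOpen A ∨ IsCompact A) → (IsOpen B ∨ IsCompact B) →
      (IsOpen (A ∪ B) ∨ IsCompact (A ∪ B)) → toFun (A ∪ B) = toFun A + toFun B
  tm2 : ∀ U : Set X, IsOpen U → toFun U = ⨆ K ∈ {K : Set X | IsCompact K ∧ K ⊆ U}, toFun K
  tm3 : ∀ F : Set X, IsClosed F → toFun F = ⨅ U ∈ {U : Set X | IsOpen U ∧ F ⊆ U}, toFun U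

/-- `μ` is compact-finite. -/
def TopMeasure.CompactFinite {X : Type u} [TopologicalSpace X] (μ : TopMeasure X) : Prop :=
  ∀ K : Set X, IsCompact K → μ.toFun K ≠ ∞

/-- The set of compactly supported continuous functions, inside `C_b(X)`. -/
def CcS (X : Type u) [TopologicalSpace X] : Set (X →ᵇ ℝ) :=
  {f | HasCompactSupport (f : X → ℝ)}

/-- The set of continuous functions vanishing at infinity, inside `C_b(X)`. -/
def C0S (X : Type u) [TopologicalSpace X] : Set (X →ᵇ ℝ) :=
  {f | Tendsto (f : X → ℝ) (cocompact X) (nhds 0)}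

/-- `𝔅` is a (non-unital) subalgebra of `C_b(X)`. -/
def IsSubalgS {X : Type u} [TopologicalSpace X] (𝔅 : Set (X →ᵇ ℝ)) : Prop :=
  (∀ f g : X →ᵇ ℝ, f ∈ 𝔅 → g ∈ 𝔅 → f + g ∈ 𝔅) ∧
  (∀ f g : X →ᵇ ℝ, f ∈ 𝔅 → g ∈ 𝔅 → f * g ∈ 𝔅) ∧
  (∀ (c : ℝ) (f : X →ᵇ ℝ), f ∈ 𝔅 → c • f ∈ 𝔅)

/-- The singly generated subalgebra `B(h)`: the smallest closed (in `𝔅`) subalgebra of `𝔅`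
containing `h`. -/
def sgen {X : Type u} [TopologicalSpace X] (𝔅 : Set (X →ᵇ ℝ)) (h : X →ᵇ ℝ) :
    Set (X →ᵇ ℝ) :=
  ⋂₀ {S : Set (X →ᵇ ℝ) | S ⊆ 𝔅 ∧ h ∈ S ∧
      (∀ f g : X →ᵇ ℝ, f ∈ S → g ∈ S → f + g ∈ S) ∧
      (∀ f g : X →ᵇ ℝ, f ∈ S → g ∈ S → f * g ∈ S) ∧
      (∀ (c : ℝ) (f : X →ᵇ ℝ), f ∈ S → c • f ∈ S) ∧
      IsClosed {x : ↥𝔅 | (x : X →ᵇ ℝ) ∈ S}}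

/-- A signed quasi-linear functional on `𝔅` (QI1), (QI2). -/
structure SignedQLF {X : Type u} [TopologicalSpace X] (𝔅 : Set (X →ᵇ ℝ)) where
  toFun : (X →ᵇ ℝ) → ℝ
  smul_eq : ∀ (a : ℝ) (f : X →ᵇ ℝ), f ∈ 𝔅 → toFun (a • f) = a * toFun f
  add_eq : ∀ h ∈ 𝔅, ∀ f g : X →ᵇ ℝ, f ∈ sgen 𝔅 h → g ∈ sgen 𝔅 h →
      toFun (f + g) = toFun f + toFun g

/-- A (positive) quasi-linear functional on `𝔅` (QI1)–(QI3). -/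
structure QLF {X : Type u} [TopologicalSpace X] (𝔅 : Set (X →ᵇ ℝ)) extends SignedQLF 𝔅 where
  pos : ∀ f : X →ᵇ ℝ, f ∈ 𝔅 → 0 ≤ f → 0 ≤ toFun f

/-- `‖ρ‖ = sup {ρ(f) : f ∈ 𝔅, 0 ≤ f ≤ 1}`, as an extended real number. -/
noncomputable def qnorm {X : Type u} [TopologicalSpace X] {𝔅 : Set (X →ᵇ ℝ)} (ρ : QLF 𝔅) :
    ℝ≥0∞ :=
  ⨆ f ∈ {f : X →ᵇ ℝ | f ∈ 𝔅 ∧ 0 ≤ f ∧ f ≤ 1}, ENNReal.ofReal (ρ.toFun f)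

/-- `m` is the measure `m_f` on `ℝ` associated with a finite topological measure `μ` and
`f ∈ C₀(X)` (case (A)): `m(W) = μ(f⁻¹(W))` for every open `W ⊆ ℝ`. -/
def IsMfA {X : Type u} [TopologicalSpace X] (μ : TopMeasure X) (f : X →ᵇ ℝ)
    (m : Measure ℝ) : Prop :=
  ∀ W : Set ℝ, IsOpen W → m W = μ.toFun ((f : X → ℝ) ⁻¹' W)

/-- `m` is the measure `m_f` on `ℝ` associated with a compact-finite topological measure `μ`
and `f ∈ C_c(X)` (case (B)): `m(W) = μ(f⁻¹(W \ {0}))` for every open `W ⊆ ℝ`. -/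
def IsMfB {X : Type u} [TopologicalSpace X] (μ : TopMeasure X) (f : X →ᵇ ℝ)
    (m : Measure ℝ) : Prop :=
  ∀ W : Set ℝ, IsOpen W → m W = μ.toFun ((f : X → ℝ) ⁻¹' (W \ {0}))

/-- The support of a (Borel) measure on `ℝ`. -/
def msupp (m : Measure ℝ) : Set ℝ := {x : ℝ | ∀ U ∈ nhds x, 0 < m U}

/-- The set function `μ_ρ` on open sets:
`μ_ρ(U) = sup {ρ(f) : f ∈ C_c(X), 0 ≤ f ≤ 1, supp f ⊆ U}`. -/
noncomputable def muO {X : Type u} [TopologicalSpace X] {𝔅 : Set (X →ᵇ ℝ)} (ρ : QLF 𝔅)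
    (U : Set X) : ℝ≥0∞ :=
  ⨆ f ∈ {f : X →ᵇ ℝ | f ∈ CcS X ∧ 0 ≤ f ∧ f ≤ 1 ∧ tsupport (f : X → ℝ) ⊆ U},
    ENNReal.ofReal (ρ.toFun f)

/-- The set function `μ_ρ` on closed sets: `μ_ρ(F) = inf {μ_ρ(U) : U open, F ⊆ U}`. -/
noncomputable def muC {X : Type u} [TopologicalSpace X] {𝔅 : Set (X →ᵇ ℝ)} (ρ : QLF 𝔅)
    (F : Set X) : ℝ≥0∞ :=
  ⨅ U ∈ {U : Set X | IsOpen U ∧ F ⊆ U}, muO ρ U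

open Classical in
/-- The set function `μ_ρ`. -/
noncomputable def muR {X : Type u} [TopologicalSpace X] {𝔅 : Set (X →ᵇ ℝ)} (ρ : QLF 𝔅) :
    Set X → ℝ≥0∞ :=
  fun A => if IsOpen A then muO ρ A else muC ρ A

/-- `ρ = ρ_μ` on `C₀(X)` (case (A)): for every `f ∈ C₀(X)` and every measure `m_f`
associated with `μ` and `f`, `ρ(f) = ∫_ℝ id dm_f`. -/
def ReprA {X : Type u} [TopologicalSpace X] {𝔅 : Set (X →ᵇ ℝ)} (μ : TopMeasure X)
    (ρ : QLF 𝔅) : Prop :=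
  ∀ f ∈ C0S X, ∀ m : Measure ℝ, IsMfA μ f m → ρ.toFun f = ∫ t, t ∂m

/-- `ρ = ρ_μ` on `C_c(X)` (case (B)). -/
def ReprB {X : Type u} [TopologicalSpace X] {𝔅 : Set (X →ᵇ ℝ)} (μ : TopMeasure X)
    (ρ : QLF 𝔅) : Prop :=
  ∀ f ∈ CcS X, ∀ m : Measure ℝ, IsMfB μ f m → ρ.toFun f = ∫ t, t ∂m


/-!
Bounded ⇒ monotone: for `0 ≤ f ≤ g`, cut `f` and `g` into horizontal layers of height `δ`.
A layer of `f` is a continuous function of `f` vanishing at `0`, hence lies in `B(f)`, so `ρ f`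
is the sum of `ρ` over the layers of `f`, and likewise for `g`. The `(k+1)`-st layer of `f` sits
under the `k`-th layer of `g`, which is saturated wherever the former is nonzero; this makes
both functions of their sum, so positivity of `ρ` compares them. Only the bottom layer of `f`
is left over, and it costs at most `δ ‖ρ‖`. General `f ≤ g` follows from `f = f⁺ - f⁻`.

Monotone ⇒ bounded: if `ρ (f n) > 4 ^ n` with `0 ≤ f n ≤ 1`, then `g = ∑ 2⁻ⁿ f n ∈ C₀(X)`
would satisfy `ρ g ≥ 2⁻ⁿ ρ (f n) > 2 ^ n` for every `n`.
-/

open BoundedContinuousFunction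
open scoped ContinuousMapZero ZeroAtInfty

variable {X : Type u} [TopologicalSpace X]

def C0Subalgebra (X : Type u) [TopologicalSpace X] : NonUnitalSubalgebra ℝ (X →ᵇ ℝ) where
  carrier := C0S X
  zero_mem' := tendsto_const_nhds
  add_mem' {f g} hf hg := by have := hf.add hg; rwa [add_zero] at this
  mul_mem' {f g} hf hg := by have := hf.mul hg; rwa [mul_zero] at this
  smul_mem' c f hf := by have := hf.const_mul c; rwa [mul_zero] at this

theorem isSubalgS_C0S : IsSubalgS (C0S X) :=
  ⟨fun _ _ => (C0Subalgebra X).add_mem, fun _ _ => (C0Subalgebra X).mul_mem,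
    fun c _ => (C0Subalgebra X).smul_mem c⟩

theorem C0S_eq_range_toBCF :
    C0S X = range (ZeroAtInftyContinuousMap.toBCF : C₀(X, ℝ) → X →ᵇ ℝ) := by
  ext f
  exact ⟨fun hf => ⟨⟨f.toContinuousMap, hf⟩, rfl⟩, by rintro ⟨g, rfl⟩; exact zero_at_infty g⟩

theorem isClosed_C0S : IsClosed (C0S X) := by
  rw [C0S_eq_range_toBCF]
  exact ZeroAtInftyContinuousMap.isClosed_range_toBCF

section sgen

variable {𝔅 : Set (X →ᵇ ℝ)} {h : X →ᵇ ℝ}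

def sgenSubmodule (𝔅 : Set (X →ᵇ ℝ)) (h : X →ᵇ ℝ) : Submodule ℝ (X →ᵇ ℝ) where
  carrier := sgen 𝔅 h
  add_mem' hf hg S hS := hS.2.2.1 _ _ (hf S hS) (hg S hS)
  zero_mem' S hS := by simpa using hS.2.2.2.2.1 0 h hS.2.1
  smul_mem' c _ hf S hS := hS.2.2.2.2.1 c _ (hf S hS)

theorem sgen_subset (h𝔅 : IsSubalgS 𝔅) (hh : h ∈ 𝔅) : sgen 𝔅 h ⊆ 𝔅 := by
  refine sInter_subset_of_mem ⟨subset_rfl, hh, h𝔅.1, h𝔅.2.1, h𝔅.2.2, ?_⟩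
  simp

end sgen

/-- Stone–Weierstrass: `φ ∘ h` is a uniform limit of polynomials without constant term in `h`. -/
theorem comp_mem_sgen {h : X →ᵇ ℝ} (hh : h ∈ C0S X) {φ : ℝ → ℝ} (hφ : Continuous φ)
    (hφ0 : φ 0 = 0) {F : X →ᵇ ℝ} (hF : ∀ x, F x = φ (h x)) : F ∈ sgen (C0S X) h := by
  rintro S ⟨-, hhS, hSadd, hSmul, hSsmul, hSclosed⟩
  set s : Set ℝ := Icc (-‖h‖) ‖h‖
  have hs : ∀ x, h x ∈ s := fun x => abs_le.mp (h.norm_coe_le_norm x)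
  have : Fact ((0 : ℝ) ∈ s) := ⟨⟨by simp, norm_nonneg h⟩⟩
  have : CompactSpace s := isCompact_iff_compactSpace.mp isCompact_Icc
  let ι : C(X, s) := ⟨codRestrict h s hs, h.continuous.codRestrict hs⟩
  let Θ : C(s, ℝ)₀ → X →ᵇ ℝ := fun g => (mkOfCompact (g : C(s, ℝ))).compContinuous ι
  have hΘ_apply : ∀ g x, Θ g x = g ⟨h x, hs x⟩ := fun _ _ => rfl
  have hΘ_mem : ∀ g, Θ g ∈ C0S X := fun g => by
    have := (map_continuous g).tendsto 0 |>.comp ((tendsto_subtype_rng (f := ι) (x := 0)).2 hh)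
    rwa [map_zero] at this
  have hΘ_cont : Continuous fun g => (⟨Θ g, hΘ_mem g⟩ : C0S X) :=
    ((continuous_compContinuous ι).comp
      ((ContinuousMap.isometryEquivBoundedOfCompact s ℝ).continuous.comp
        ContinuousMapZero.isClosedEmbedding_toContinuousMap.continuous)).subtype_mk _
  have hΘS : ∀ g, Θ g ∈ S := by
    intro g
    induction g using ContinuousMapZero.induction_on_of_compact with
    | zero => convert hSsmul 0 h hhS; ext; simp [hΘ_apply]
    | id => exact hhS
    | star_id => exact hhS
    | add f g hf hg => exact hSadd _ _ hf hg
    | mul f g hf hg => exact hSmul _ _ hf hg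
    | smul r f hf => exact hSsmul r _ hf
    | frequently f hf => exact hf.mem_of_closed (hSclosed.preimage hΘ_cont)
  convert hΘS ⟨⟨φ ∘ Subtype.val, hφ.comp continuous_subtype_val⟩, hφ0⟩
  ext x
  exact hF x

def layer (f : X →ᵇ ℝ) (a b : ℝ) : X →ᵇ ℝ := f ⊓ const X b - f ⊓ const X a

section layer

variable {f : X →ᵇ ℝ} {a b : ℝ}

@[simp]
theorem layer_apply (x : X) : layer f a b x = min (f x) b - min (f x) a := rfl

theorem layer_nonneg (hab : a ≤ b) : 0 ≤ layer f a b := fun _ =>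
  sub_nonneg.2 (min_le_min_left _ hab)

theorem layer_apply_le (hab : a ≤ b) (x : X) : layer f a b x ≤ b - a := by
  rw [layer_apply]
  rcases le_total (f x) a with h | h
  · rw [min_eq_left (h.trans hab), min_eq_left h]
    linarith
  · rw [min_eq_right h]
    linarith [min_le_right (f x) b]

theorem layer_apply_eq_zero {x : X} (hab : a ≤ b) (hx : f x ≤ a) : layer f a b x = 0 := by
  simp [min_eq_left hx, min_eq_left (hx.trans hab)]

theorem layer_apply_eq_sub {x : X} (hab : a ≤ b) (hx : b ≤ f x) : layer f a b x = b - a := by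
  simp [min_eq_right hx, min_eq_right (hab.trans hx)]

theorem layer_mem_sgen (hf : f ∈ C0S X) (ha : 0 ≤ a) (hb : 0 ≤ b) :
    layer f a b ∈ sgen (C0S X) f :=
  comp_mem_sgen hf (φ := fun t => min t b - min t a) (by fun_prop) (by simp [ha, hb])
    fun _ => rfl

theorem sum_layer {δ : ℝ} {n : ℕ} (hf0 : 0 ≤ f) (hfn : ∀ x, f x ≤ n * δ) :
    ∑ k ∈ Finset.range n, layer f (k * δ) (k * δ + δ) = f := by
  ext x
  have := Finset.sum_range_sub (fun k : ℕ => min (f x) (k * δ)) n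
  simp only [Nat.cast_succ, add_one_mul] at this
  have h0 : 0 ≤ f x := hf0 x
  simp [this, min_eq_left (hfn x), h0]

end layer

theorem exists_mem_C0S_forall_smul_le {f : ℕ → X →ᵇ ℝ} (hf : ∀ n, f n ∈ C0S X)
    (hf0 : ∀ n, 0 ≤ f n) (hf1 : ∀ n, f n ≤ 1) :
    ∃ g ∈ C0S X, ∀ n, (2⁻¹ : ℝ) ^ n • f n ≤ g := by
  have hnorm (n : ℕ) : ‖(2⁻¹ : ℝ) ^ n • f n‖ ≤ 2⁻¹ ^ n := by
    have : ‖f n‖ ≤ 1 := (norm_le zero_le_one).2 fun x =>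
      abs_le.2 ⟨by have : 0 ≤ f n x := hf0 n x; linarith, hf1 n x⟩
    rw [norm_smul, norm_pow, norm_inv, Real.norm_two]
    exact mul_le_of_le_one_right (by positivity) this
  have hsum := (Summable.of_norm_bounded
    (summable_geometric_of_lt_one (by norm_num) (by norm_num)) hnorm).hasSum
  refine ⟨∑' n, (2⁻¹ : ℝ) ^ n • f n, tsum_mem (s := C0Subalgebra X) isClosed_C0S fun n =>
    (C0Subalgebra X).smul_mem _ (hf n), fun n => ?_⟩
  exact le_hasSum hsum n fun j _ x => mul_nonneg (by positivity) (hf0 j x)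

namespace SignedQLF

variable {𝔅 : Set (X →ᵇ ℝ)} (ρ : SignedQLF 𝔅) {h : X →ᵇ ℝ}

def sgenAddHom (hh : h ∈ 𝔅) : sgenSubmodule 𝔅 h →+ ℝ :=
  AddMonoidHom.mk' (fun f => ρ.toFun f) fun f g => ρ.add_eq h hh f g f.2 g.2

theorem map_sub_of_mem_sgen (hh : h ∈ 𝔅) {f g : X →ᵇ ℝ} (hf : f ∈ sgen 𝔅 h)
    (hg : g ∈ sgen 𝔅 h) : ρ.toFun (f - g) = ρ.toFun f - ρ.toFun g :=
  map_sub (ρ.sgenAddHom hh) ⟨f, hf⟩ ⟨g, hg⟩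

theorem map_sum_of_mem_sgen (hh : h ∈ 𝔅) {ι : Type*} (s : Finset ι) {u : ι → X →ᵇ ℝ}
    (hu : ∀ i, u i ∈ sgen 𝔅 h) : ρ.toFun (∑ i ∈ s, u i) = ∑ i ∈ s, ρ.toFun (u i) := by
  have := map_sum (ρ.sgenAddHom hh) (fun i => ⟨u i, hu i⟩) s
  rwa [sgenAddHom, AddMonoidHom.mk'_apply, Submodule.coe_sum] at this

end SignedQLF

namespace QLF

section

variable {𝔅 : Set (X →ᵇ ℝ)} (ρ : QLF 𝔅)

theorem apply_le_apply_of_mem_sgen (h𝔅 : IsSubalgS 𝔅) {h f g : X →ᵇ ℝ} (hh : h ∈ 𝔅)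
    (hf : f ∈ sgen 𝔅 h) (hg : g ∈ sgen 𝔅 h) (hfg : f ≤ g) : ρ.toFun f ≤ ρ.toFun g := by
  have hgf : g - f ∈ sgen 𝔅 h := (sgenSubmodule 𝔅 h).sub_mem hg hf
  have := ρ.pos _ (sgen_subset h𝔅 hh hgf) (sub_nonneg.2 hfg)
  rw [ρ.map_sub_of_mem_sgen hh hg hf] at this
  linarith

theorem apply_le_qnorm_toReal (hρ : qnorm ρ ≠ ∞) {w : X →ᵇ ℝ} (hw : w ∈ 𝔅) (hw0 : 0 ≤ w)
    (hw1 : w ≤ 1) : ρ.toFun w ≤ (qnorm ρ).toReal :=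
  (ENNReal.ofReal_le_iff_le_toReal hρ).1 (le_iSup₂_of_le w ⟨hw, hw0, hw1⟩ le_rfl)

theorem exists_lt_apply_of_qnorm_eq_top (hρ : qnorm ρ = ∞) (r : ℝ) :
    ∃ w ∈ 𝔅, 0 ≤ w ∧ w ≤ 1 ∧ r < ρ.toFun w := by
  have : ENNReal.ofReal r < qnorm ρ := hρ ▸ ENNReal.ofReal_lt_top
  simp only [qnorm, lt_iSup_iff] at this
  obtain ⟨w, ⟨hw, hw0, hw1⟩, hlt⟩ := this
  exact ⟨w, hw, hw0, hw1, (ENNReal.ofReal_lt_ofReal_iff'.1 hlt).1⟩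

theorem apply_le_mul_qnorm_toReal (h𝔅 : IsSubalgS 𝔅) (hρ : qnorm ρ ≠ ∞) {w : X →ᵇ ℝ}
    (hw : w ∈ 𝔅) (hw0 : 0 ≤ w) {δ : ℝ} (hδ : 0 < δ) (hwδ : ∀ x, w x ≤ δ) :
    ρ.toFun w ≤ δ * (qnorm ρ).toReal := by
  have hw1 : δ⁻¹ • w ≤ 1 := fun x => by
    change δ⁻¹ * w x ≤ 1
    rw [inv_mul_le_iff₀ hδ, mul_one]
    exact hwδ x
  have hw0' : 0 ≤ δ⁻¹ • w := fun x => mul_nonneg (inv_nonneg.2 hδ.le) (hw0 x)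
  have := ρ.apply_le_qnorm_toReal hρ (h𝔅.2.2 δ⁻¹ w hw) hw0' hw1
  calc ρ.toFun w = δ * ρ.toFun (δ⁻¹ • w) := by
        rw [ρ.smul_eq _ _ hw, mul_inv_cancel_left₀ hδ.ne']
    _ ≤ δ * (qnorm ρ).toReal := by gcongr

end

variable (ρ : QLF (C0S X))

/-- Both `u` and `v` are functions of `u + v`, namely `u = (u + v - δ)⁺` and `v = min (u + v) δ`,
so they can be compared inside `B(u + v)`. -/
theorem apply_le_apply_of_eq_bound_on_support {u v : X →ᵇ ℝ} {δ : ℝ} (hδ : 0 ≤ δ)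
    (hu : u ∈ C0S X) (hv : v ∈ C0S X) (hu0 : 0 ≤ u) (huv : u ≤ v) (hvδ : ∀ x, v x ≤ δ)
    (hsupp : ∀ x, u x ≠ 0 → v x = δ) : ρ.toFun u ≤ ρ.toFun v := by
  have huv_mem : u + v ∈ C0S X := (C0Subalgebra X).add_mem hu hv
  have hu_mem : u ∈ sgen (C0S X) (u + v) := by
    refine comp_mem_sgen huv_mem (φ := fun t => max (t - δ) 0) (by fun_prop) (by simp [hδ])
      fun x => ?_
    rcases eq_or_ne (u x) 0 with h0 | h0
    · simp [h0, hvδ x]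
    · simpa [hsupp x h0] using hu0 x
  have hv_mem : v ∈ sgen (C0S X) (u + v) := by
    refine comp_mem_sgen huv_mem (φ := fun t => min t δ) (by fun_prop) (min_eq_left hδ)
      fun x => ?_
    rcases eq_or_ne (u x) 0 with h0 | h0
    · simp [h0, hvδ x]
    · simpa [hsupp x h0] using hu0 x
  exact ρ.apply_le_apply_of_mem_sgen isSubalgS_C0S huv_mem hu_mem hv_mem huv

theorem apply_layer_le_apply_layer {f g : X →ᵇ ℝ} (hf : f ∈ C0S X) (hg : g ∈ C0S X)
    (hfg : f ≤ g) {a δ : ℝ} (ha : 0 ≤ a) (hδ : 0 ≤ δ) :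
    ρ.toFun (layer f (a + δ) (a + δ + δ)) ≤ ρ.toFun (layer g a (a + δ)) := by
  have hlow : a ≤ a + δ := le_add_of_nonneg_right hδ
  have hup : a + δ ≤ a + δ + δ := le_add_of_nonneg_right hδ
  refine ρ.apply_le_apply_of_eq_bound_on_support hδ
    (sgen_subset isSubalgS_C0S hf (layer_mem_sgen hf (by positivity) (by positivity)))
    (sgen_subset isSubalgS_C0S hg (layer_mem_sgen hg ha (by positivity)))
    (layer_nonneg hup) (fun x => ?_) (fun x => ?_) (fun x hx => ?_)
  · change layer f (a + δ) (a + δ + δ) x ≤ layer g a (a + δ) x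
    rcases le_total (f x) (a + δ) with h | h
    · rw [layer_apply_eq_zero hup h]
      exact layer_nonneg hlow x
    · rw [layer_apply_eq_sub hlow (h.trans (hfg x))]
      linarith [layer_apply_le hup (f := f) x]
  · linarith [layer_apply_le hlow (f := g) x]
  · have h : a + δ ≤ g x := by
      by_contra! h
      exact hx (layer_apply_eq_zero hup ((hfg x).trans h.le))
    rw [layer_apply_eq_sub hlow h]
    ring

theorem apply_le_apply_add_of_nonneg (hρ : qnorm ρ ≠ ∞) {f g : X →ᵇ ℝ} (hf : f ∈ C0S X)
    (hg : g ∈ C0S X) (hf0 : 0 ≤ f) (hfg : f ≤ g) {δ : ℝ} (hδ : 0 < δ) {n : ℕ}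
    (hgn : ∀ x, g x ≤ n * δ) : ρ.toFun f ≤ ρ.toFun g + δ * (qnorm ρ).toReal := by
  set L : (X →ᵇ ℝ) → ℕ → X →ᵇ ℝ := fun f k => layer f (k * δ) (k * δ + δ)
  have hL_mem {f : X →ᵇ ℝ} (hf : f ∈ C0S X) (k : ℕ) : L f k ∈ sgen (C0S X) f :=
    layer_mem_sgen hf (by positivity) (by positivity)
  have hsum_f : ρ.toFun f = ∑ k ∈ Finset.range (n + 1), ρ.toFun (L f k) := by
    rw [← ρ.map_sum_of_mem_sgen hf _ (hL_mem hf), sum_layer hf0 fun x => ?_]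
    have hx : f x ≤ g x := hfg x
    push_cast
    linarith [hgn x]
  have hsum_g : ρ.toFun g = ∑ k ∈ Finset.range n, ρ.toFun (L g k) := by
    rw [← ρ.map_sum_of_mem_sgen hg _ (hL_mem hg), sum_layer (hf0.trans hfg) hgn]
  have hbottom : ρ.toFun (L f 0) ≤ δ * (qnorm ρ).toReal := by
    have h0 : L f 0 = layer f 0 δ := by simp [L]
    rw [h0]
    refine ρ.apply_le_mul_qnorm_toReal isSubalgS_C0S hρ
      (sgen_subset isSubalgS_C0S hf (layer_mem_sgen hf le_rfl hδ.le)) (layer_nonneg hδ.le) hδ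
      fun x => ?_
    simpa using layer_apply_le (f := f) hδ.le x
  have hstep (k : ℕ) : ρ.toFun (L f (k + 1)) ≤ ρ.toFun (L g k) := by
    have hk : ((k + 1 : ℕ) : ℝ) * δ = k * δ + δ := by push_cast; ring
    simpa only [L, hk] using ρ.apply_layer_le_apply_layer hf hg hfg (by positivity) hδ.le
  calc ρ.toFun f = ∑ k ∈ Finset.range n, ρ.toFun (L f (k + 1)) + ρ.toFun (L f 0) := by
        rw [hsum_f, Finset.sum_range_succ']
    _ ≤ ∑ k ∈ Finset.range n, ρ.toFun (L g k) + δ * (qnorm ρ).toReal :=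
        add_le_add (Finset.sum_le_sum fun k _ => hstep k) hbottom
    _ = ρ.toFun g + δ * (qnorm ρ).toReal := by rw [hsum_g]

theorem apply_le_apply_of_nonneg (hρ : qnorm ρ ≠ ∞) {f g : X →ᵇ ℝ} (hf : f ∈ C0S X)
    (hg : g ∈ C0S X) (hf0 : 0 ≤ f) (hfg : f ≤ g) : ρ.toFun f ≤ ρ.toFun g := by
  have hlim : Tendsto (fun δ => ρ.toFun g + δ * (qnorm ρ).toReal) (𝓝[>] 0) (𝓝 (ρ.toFun g)) := by
    refine tendsto_nhdsWithin_of_tendsto_nhds ?_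
    have : Continuous fun δ : ℝ => ρ.toFun g + δ * (qnorm ρ).toReal := by fun_prop
    simpa using this.tendsto 0
  refine ge_of_tendsto hlim (eventually_nhdsWithin_of_forall fun δ (hδ : 0 < δ) => ?_)
  obtain ⟨n, hn⟩ := exists_nat_ge (‖g‖ / δ)
  refine ρ.apply_le_apply_add_of_nonneg hρ hf hg hf0 hfg hδ (n := n) fun x => ?_
  calc g x ≤ ‖g‖ := (le_abs_self _).trans (g.norm_coe_le_norm x)
    _ ≤ n * δ := (div_le_iff₀ hδ).1 hn

theorem apply_le_apply_of_qnorm_ne_top (hρ : qnorm ρ ≠ ∞) {f g : X →ᵇ ℝ} (hf : f ∈ C0S X)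
    (hg : g ∈ C0S X) (hfg : f ≤ g) : ρ.toFun f ≤ ρ.toFun g := by
  have hparts {h : X →ᵇ ℝ} (hh : h ∈ C0S X) :
      h⁺ ∈ sgen (C0S X) h ∧ h⁻ ∈ sgen (C0S X) h :=
    ⟨comp_mem_sgen hh continuous_posPart posPart_zero fun _ => rfl,
      comp_mem_sgen hh continuous_negPart negPart_zero fun _ => rfl⟩
  have hsplit {h : X →ᵇ ℝ} (hh : h ∈ C0S X) : ρ.toFun h = ρ.toFun h⁺ - ρ.toFun h⁻ := by
    rw [← ρ.map_sub_of_mem_sgen hh (hparts hh).1 (hparts hh).2, posPart_sub_negPart]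
  have hC0 {h : X →ᵇ ℝ} (hh : h ∈ C0S X) : h⁺ ∈ C0S X ∧ h⁻ ∈ C0S X :=
    ⟨sgen_subset isSubalgS_C0S hh (hparts hh).1, sgen_subset isSubalgS_C0S hh (hparts hh).2⟩
  have hpos := ρ.apply_le_apply_of_nonneg hρ (hC0 hf).1 (hC0 hg).1 (posPart_nonneg f)
    (posPart_mono hfg)
  have hneg := ρ.apply_le_apply_of_nonneg hρ (hC0 hg).2 (hC0 hf).2 (negPart_nonneg g)
    (negPart_anti hfg)
  rw [hsplit hf, hsplit hg]
  linarith

theorem qnorm_ne_top_of_monotone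
    (hmono : ∀ f g : X →ᵇ ℝ, f ∈ C0S X → g ∈ C0S X → f ≤ g → ρ.toFun f ≤ ρ.toFun g) :
    qnorm ρ ≠ ∞ := by
  intro hρ
  choose f hf hf0 hf1 hlt using fun n : ℕ => ρ.exists_lt_apply_of_qnorm_eq_top hρ (4 ^ n)
  obtain ⟨g, hg, hfg⟩ := exists_mem_C0S_forall_smul_le hf hf0 hf1
  obtain ⟨n, hn⟩ := pow_unbounded_of_one_lt (ρ.toFun g) one_lt_two
  have hle := hmono _ _ ((C0Subalgebra X).smul_mem _ (hf n)) hg (hfg n)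
  rw [ρ.smul_eq _ _ (hf n)] at hle
  have hgt := mul_lt_mul_of_pos_left (hlt n) (by positivity : (0 : ℝ) < 2⁻¹ ^ n)
  have h4 : (2⁻¹ : ℝ) ^ n * 4 ^ n = 2 ^ n := by rw [← mul_pow]; norm_num
  linarith

end QLF

theorem qlf_monotone_iff_bounded_general {X : Type u} [TopologicalSpace X] (ρ : QLF (C0S X)) :
    (∀ f g : X →ᵇ ℝ, f ∈ C0S X → g ∈ C0S X → f ≤ g → ρ.toFun f ≤ ρ.toFun g) ↔
      qnorm ρ ≠ ∞ :=
  ⟨ρ.qnorm_ne_top_of_monotone, fun hρ _ _ hf hg hfg =>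
    ρ.apply_le_apply_of_qnorm_ne_top hρ hf hg hfg⟩

/-- a quasi-linear functional on `C₀(X)` is monotone iff it is bounded. -/
theorem qlf_monotone_iff_bounded {X : Type u} [TopologicalSpace X]
    [LocallyCompactSpace X] [T2Space X] [ConnectedSpace X] (ρ : QLF (C0S X)) :
    (∀ f g : X →ᵇ ℝ, f ∈ C0S X → g ∈ C0S X → f ≤ g → ρ.toFun f ≤ ρ.toFun g) ↔
      qnorm ρ ≠ ∞ :=
  qlf_monotone_iff_bounded_general ρ
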